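/- Let A, D be Hermitian n×n matrices with spectra in an open interval I, let f : I → ℝ be a convex function, and let α ∈ (0,1). Then for every k = 1, …, n, Σ_{i=1}^k λ_i(f(αA + (1−α)D)) ≤ Σ_{i=1}^k λ_i(α f(A) + (1−α) f(D)). -/

import Mathlib

/-!
Let `v_j` be an orthonormal eigenbasis of `C = αA + (1-α)D`, with eigenvalues `c_j`, and put
`M = α f(A) + (1-α) f(D)`. With `u_i` an orthonormal eigenbasis of `A`, the number
`⟨v_j, A v_j⟩` is the average of the eigenvalues of `A` with weights `|⟨u_i, v_j⟩|²`, so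
Jensen's inequality gives `f ⟨v_j, A v_j⟩ ≤ ⟨v_j, f(A) v_j⟩`; the same holds for `D`, and the
convexity of `f` yields `f(c_j) ≤ ⟨v_j, M v_j⟩`. The eigenvalues of `f(C)` are the `f(c_j)`, so
summing over the `k` indices with the largest `f(c_j)` and applying Ky Fan's maximum principle
to `M` proves the inequality. Ky Fan's principle in turn reduces, via the same weights, to the
elementary fact that a weighted sum `∑ gᵢ wᵢ` with `0 ≤ wᵢ ≤ 1` and `∑ wᵢ = k` is at most the
sum of the `k` largest `gᵢ`.
-/

open scoped ComplexOrder

/-- The eigenvalues of a (Hermitian) matrix arranged in non-increasing order, counted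
with multiplicity; junk value `0` for non-Hermitian matrices. -/
noncomputable def eigDesc {n : ℕ} (A : Matrix (Fin n) (Fin n) ℂ) (i : Fin n) : ℝ :=
  if h : A.IsHermitian then (h.eigenvalues ∘ Tuple.sort h.eigenvalues) i.rev else 0

open Finset Matrix

/-- `Tuple.sort` sorts increasingly, so `i.rev` runs through the values from the largest. -/
noncomputable def sumLargest {n : ℕ} (g : Fin n → ℝ) (k : ℕ) : ℝ :=
  ∑ i ∈ univ.filter (fun i : Fin n => (i : ℕ) < k), g (Tuple.sort g i.rev)

theorem sum_eigDesc_eq_sumLargest {n : ℕ} {H : Matrix (Fin n) (Fin n) ℂ} (hH : H.IsHermitian)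
    (k : ℕ) :
    ∑ i ∈ univ.filter (fun i : Fin n => (i : ℕ) < k), eigDesc H i =
      sumLargest hH.eigenvalues k := by
  simp only [eigDesc, dif_pos hH]
  rfl

theorem exists_sumLargest_eq_sum {n : ℕ} (g : Fin n → ℝ) {k : ℕ} (hk : k ≤ n) :
    ∃ S : Finset (Fin n), #S = k ∧ (∀ i ∈ S, ∀ j ∉ S, g j ≤ g i) ∧
      sumLargest g k = ∑ i ∈ S, g i := by
  set σ := Tuple.sort g
  have hinj : Function.Injective fun i : Fin n => σ i.rev := σ.injective.comp Fin.rev_injective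
  refine ⟨(univ.filter fun i : Fin n => (i : ℕ) < k).image fun i => σ i.rev, ?_, ?_, ?_⟩
  · rw [card_image_of_injective _ hinj, Fin.card_filter_val_lt, min_eq_right hk]
  · simp only [mem_image, mem_filter, mem_univ, true_and, not_exists, not_and]
    rintro _ ⟨a, ha, rfl⟩ j hj
    obtain ⟨b, rfl⟩ := σ.surjective j
    have hb : ¬ ((b.rev : ℕ) < k) := fun h => hj b.rev h (by rw [Fin.rev_rev])
    refine Tuple.monotone_sort g (Fin.le_def.2 ?_)
    simp only [Fin.val_rev] at hb ⊢
    omega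
  · exact (sum_image fun a _ b _ h => hinj h).symm

theorem sum_mul_le_sum_of_forall_le {ι : Type*} [Fintype ι] [DecidableEq ι] (g w : ι → ℝ)
    (S : Finset ι) (hS : ∀ i ∈ S, ∀ j ∉ S, g j ≤ g i)
    (hw0 : ∀ i, 0 ≤ w i) (hw1 : ∀ i, w i ≤ 1) (hw : ∑ i, w i = #S) :
    ∑ i, g i * w i ≤ ∑ i ∈ S, g i := by
  obtain ⟨t, ht_le, hle_t⟩ : ∃ t, (∀ i ∈ S, t ≤ g i) ∧ ∀ j ∉ S, g j ≤ t := by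
    rcases S.eq_empty_or_nonempty with rfl | hne
    · obtain ⟨t, ht⟩ := (Set.finite_range g).bddAbove
      exact ⟨t, by simp, fun j _ => ht ⟨j, rfl⟩⟩
    · exact ⟨S.inf' hne g, fun i hi => inf'_le g hi,
        fun j hj => le_inf' hne g fun i hi => hS i hi j hj⟩
  -- `t` separates the values on `S` from those off `S`, so every term below is nonnegative.
  have key : 0 ≤ ∑ i, (g i - t) * ((if i ∈ S then 1 else 0) - w i) := by
    refine sum_nonneg fun i _ => ?_
    by_cases hi : i ∈ S
    · simp only [hi, if_true]
      exact mul_nonneg (sub_nonneg.2 (ht_le i hi)) (sub_nonneg.2 (hw1 i))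
    · simp only [hi, if_false]
      exact mul_nonneg_of_nonpos_of_nonpos (sub_nonpos.2 (hle_t i hi)) (by linarith [hw0 i])
  have expand : ∑ i, (g i - t) * ((if i ∈ S then 1 else 0) - w i)
      = ∑ i ∈ S, g i - ∑ i, g i * w i - t * (#S - ∑ i, w i) := by
    simp only [mul_sub, sub_mul, mul_ite, mul_one, mul_zero, sum_sub_distrib, ← sum_filter,
      filter_mem_eq_inter, univ_inter, ← mul_sum, sum_const, nsmul_eq_mul]
    ring
  rw [expand, hw, sub_self, mul_zero, sub_zero] at key
  linarith

theorem sum_mul_le_sumLargest {n : ℕ} (g w : Fin n → ℝ) {k : ℕ}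
    (hw0 : ∀ i, 0 ≤ w i) (hw1 : ∀ i, w i ≤ 1) (hw : ∑ i, w i = k) :
    ∑ i, g i * w i ≤ sumLargest g k := by
  have hk : k ≤ n := by
    have : (k : ℝ) ≤ n := by
      simpa [← hw] using sum_le_sum fun i (_ : i ∈ univ) => hw1 i
    exact_mod_cast this
  obtain ⟨S, hcard, hS, hsum⟩ := exists_sumLargest_eq_sum g hk
  rw [hsum]
  exact sum_mul_le_sum_of_forall_le g w S hS hw0 hw1 (by rw [hw, hcard])

namespace Matrix

variable {m 𝕜 : Type*} [Fintype m] [DecidableEq m] [RCLike 𝕜]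

theorem sum_norm_sq_apply_left_of_mem_unitaryGroup {U : Matrix m m 𝕜}
    (hU : U ∈ unitaryGroup m 𝕜) (j : m) : ∑ i, ‖U i j‖ ^ 2 = 1 := by
  have h : (star U * U) j j = (1 : Matrix m m 𝕜) j j := by rw [Unitary.star_mul_self_of_mem hU]
  simp only [mul_apply, star_apply, RCLike.star_def, RCLike.conj_mul, one_apply_eq] at h
  exact_mod_cast h

theorem sum_norm_sq_apply_right_of_mem_unitaryGroup {U : Matrix m m 𝕜}
    (hU : U ∈ unitaryGroup m 𝕜) (i : m) : ∑ j, ‖U i j‖ ^ 2 = 1 := by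
  simpa [star_apply] using sum_norm_sq_apply_left_of_mem_unitaryGroup (Unitary.star_mem hU) i

theorem star_mul_diagonal_mul_apply_self (P : Matrix m m 𝕜) (g : m → ℝ) (j : m) :
    (star P * diagonal (RCLike.ofReal ∘ g) * P : Matrix m m 𝕜) j j =
      ((∑ i, g i * ‖P i j‖ ^ 2 : ℝ) : 𝕜) := by
  rw [mul_apply]
  simp only [mul_diagonal, star_apply, RCLike.star_def, Function.comp_apply]
  push_cast
  refine sum_congr rfl fun i _ => ?_
  rw [← RCLike.conj_mul]
  ring

namespace IsHermitian

variable {H : Matrix m m 𝕜}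

theorem star_eigenvectorUnitary_mul_mem_unitaryGroup (hH : H.IsHermitian) {W : Matrix m m 𝕜}
    (hW : W ∈ unitaryGroup m 𝕜) :
    star (hH.eigenvectorUnitary : Matrix m m 𝕜) * W ∈ unitaryGroup m 𝕜 :=
  mul_mem (Unitary.star_mem hH.eigenvectorUnitary.2) hW

theorem re_star_mul_cfc_mul_apply_self (hH : H.IsHermitian) (h : ℝ → ℝ) (W : Matrix m m 𝕜)
    (j : m) :
    RCLike.re ((star W * cfc h H * W) j j) =
      ∑ i, ‖(star (hH.eigenvectorUnitary : Matrix m m 𝕜) * W) i j‖ ^ 2 • h (hH.eigenvalues i) := by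
  set U : Matrix m m 𝕜 := ↑hH.eigenvectorUnitary
  have : star W * cfc h H * W =
      star (star U * W) * diagonal (RCLike.ofReal ∘ h ∘ hH.eigenvalues) * (star U * W) := by
    rw [hH.cfc_eq, IsHermitian.cfc, Unitary.conjStarAlgAut_apply, star_mul, star_star]
    simp only [U, Matrix.mul_assoc]
  rw [this, star_mul_diagonal_mul_apply_self, RCLike.ofReal_re]
  simp only [Function.comp_apply, smul_eq_mul, mul_comm]

theorem re_star_mul_mul_apply_self (hH : H.IsHermitian) (W : Matrix m m 𝕜) (j : m) :
    RCLike.re ((star W * H * W) j j) =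
      ∑ i, ‖(star (hH.eigenvectorUnitary : Matrix m m 𝕜) * W) i j‖ ^ 2 • hH.eigenvalues i := by
  simpa only [cfc_id ℝ H hH.isSelfAdjoint, id] using hH.re_star_mul_cfc_mul_apply_self id W j

theorem re_star_eigenvectorUnitary_mul_mul_apply_self (hH : H.IsHermitian) (j : m) :
    RCLike.re ((star (hH.eigenvectorUnitary : Matrix m m 𝕜) * H * hH.eigenvectorUnitary) j j) =
      hH.eigenvalues j := by
  have hdiag := hH.conjStarAlgAut_star_eigenvectorUnitary
  rw [Unitary.conjStarAlgAut_star_apply] at hdiag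
  rw [hdiag, diagonal_apply_eq, Function.comp_apply, RCLike.ofReal_re]

theorem re_star_mul_mul_apply_mem (hH : H.IsHermitian) {I : Set ℝ} (hI : Convex ℝ I)
    (hspec : spectrum ℝ H ⊆ I) {W : Matrix m m 𝕜} (hW : W ∈ unitaryGroup m 𝕜) (j : m) :
    RCLike.re ((star W * H * W) j j) ∈ I := by
  rw [hH.re_star_mul_mul_apply_self]
  exact hI.sum_mem (fun i _ => sq_nonneg _) (sum_norm_sq_apply_left_of_mem_unitaryGroup
    (hH.star_eigenvectorUnitary_mul_mem_unitaryGroup hW) j)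
    fun i _ => hspec (hH.eigenvalues_mem_spectrum_real i)

theorem map_re_star_mul_mul_apply_le (hH : H.IsHermitian) {I : Set ℝ} {f : ℝ → ℝ}
    (hf : ConvexOn ℝ I f) (hspec : spectrum ℝ H ⊆ I) {W : Matrix m m 𝕜}
    (hW : W ∈ unitaryGroup m 𝕜) (j : m) :
    f (RCLike.re ((star W * H * W) j j)) ≤ RCLike.re ((star W * cfc f H * W) j j) := by
  rw [hH.re_star_mul_mul_apply_self, hH.re_star_mul_cfc_mul_apply_self]
  exact hf.map_sum_le (fun i _ => sq_nonneg _) (sum_norm_sq_apply_left_of_mem_unitaryGroup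
    (hH.star_eigenvectorUnitary_mul_mem_unitaryGroup hW) j)
    fun i _ => hspec (hH.eigenvalues_mem_spectrum_real i)

end IsHermitian

theorem map_re_star_mul_convexCombination_mul_apply_le {A D : Matrix m m 𝕜}
    (hA : A.IsHermitian) (hD : D.IsHermitian) {I : Set ℝ} {f : ℝ → ℝ} (hf : ConvexOn ℝ I f)
    (hAspec : spectrum ℝ A ⊆ I) (hDspec : spectrum ℝ D ⊆ I) {α : ℝ} (hα0 : 0 ≤ α) (hα1 : α ≤ 1)
    {W : Matrix m m 𝕜} (hW : W ∈ unitaryGroup m 𝕜) (j : m) :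
    f (RCLike.re ((star W * (α • A + (1 - α) • D) * W) j j)) ≤
      RCLike.re ((star W * (α • cfc f A + (1 - α) • cfc f D) * W) j j) := by
  have hlin : ∀ X Y : Matrix m m 𝕜, RCLike.re ((star W * (α • X + (1 - α) • Y) * W) j j) =
      α * RCLike.re ((star W * X * W) j j) + (1 - α) * RCLike.re ((star W * Y * W) j j) := by
    intro X Y
    simp [Matrix.mul_add, Matrix.add_mul, RCLike.smul_re]
  rw [hlin, hlin]
  calc _ ≤ α * f (RCLike.re ((star W * A * W) j j)) +
        (1 - α) * f (RCLike.re ((star W * D * W) j j)) :=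
        hf.2 (hA.re_star_mul_mul_apply_mem hf.1 hAspec hW j)
          (hD.re_star_mul_mul_apply_mem hf.1 hDspec hW j) hα0 (sub_nonneg.2 hα1) (by ring)
    _ ≤ _ := add_le_add
        (mul_le_mul_of_nonneg_left (hA.map_re_star_mul_mul_apply_le hf hAspec hW j) hα0)
        (mul_le_mul_of_nonneg_left (hD.map_re_star_mul_mul_apply_le hf hDspec hW j)
          (sub_nonneg.2 hα1))

/-- Ky Fan's maximum principle, reduced to `sum_mul_le_sumLargest`: the weights
`∑ j ∈ S, ‖P i j‖ ^ 2` of the unitary `P = U⋆W` lie in `[0, 1]` and add up to `#S`. -/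
theorem sum_re_star_mul_cfc_mul_apply_le_sumLargest {n : ℕ} {H : Matrix (Fin n) (Fin n) 𝕜}
    (hH : H.IsHermitian) (h : ℝ → ℝ) {W : Matrix (Fin n) (Fin n) 𝕜}
    (hW : W ∈ unitaryGroup (Fin n) 𝕜) (S : Finset (Fin n)) :
    ∑ j ∈ S, RCLike.re ((star W * cfc h H * W) j j) ≤ sumLargest (h ∘ hH.eigenvalues) #S := by
  have hP := hH.star_eigenvectorUnitary_mul_mem_unitaryGroup hW
  set P := star (hH.eigenvectorUnitary : Matrix (Fin n) (Fin n) 𝕜) * W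
  calc ∑ j ∈ S, RCLike.re ((star W * cfc h H * W) j j)
      = ∑ i, (h ∘ hH.eigenvalues) i * ∑ j ∈ S, ‖P i j‖ ^ 2 := by
        simp only [hH.re_star_mul_cfc_mul_apply_self, smul_eq_mul, mul_sum]
        rw [sum_comm]
        simp only [Function.comp_apply, mul_comm, P]
    _ ≤ sumLargest (h ∘ hH.eigenvalues) #S := by
        refine sum_mul_le_sumLargest _ _ (fun i => sum_nonneg fun j _ => sq_nonneg _)
          (fun i => ?_) ?_
        · calc ∑ j ∈ S, ‖P i j‖ ^ 2 ≤ ∑ j, ‖P i j‖ ^ 2 :=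
                sum_le_sum_of_subset_of_nonneg (subset_univ S) fun j _ _ => sq_nonneg _
            _ = 1 := sum_norm_sq_apply_right_of_mem_unitaryGroup hP i
        · rw [sum_comm, sum_congr rfl fun j _ => sum_norm_sq_apply_left_of_mem_unitaryGroup hP j]
          simp

end Matrix

theorem sum_eigDesc_cfc_le_sumLargest {n : ℕ} {C : Matrix (Fin n) (Fin n) ℂ} (hC : C.IsHermitian)
    (h : ℝ → ℝ) {k : ℕ} (hk : k ≤ n) :
    ∑ i ∈ univ.filter (fun i : Fin n => (i : ℕ) < k), eigDesc (cfc h C) i ≤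
      sumLargest (h ∘ hC.eigenvalues) k := by
  have hE : (cfc h C).IsHermitian := cfc_predicate h C
  obtain ⟨S, hcard, -, hsum⟩ := exists_sumLargest_eq_sum hE.eigenvalues hk
  rw [sum_eigDesc_eq_sumLargest hE, hsum, ← hcard]
  calc ∑ j ∈ S, hE.eigenvalues j
      = ∑ j ∈ S, RCLike.re ((star (hE.eigenvectorUnitary : Matrix (Fin n) (Fin n) ℂ) * cfc h C *
          hE.eigenvectorUnitary) j j) := by
        simp only [hE.re_star_eigenvectorUnitary_mul_mul_apply_self]
    _ ≤ _ := sum_re_star_mul_cfc_mul_apply_le_sumLargest hC h hE.eigenvectorUnitary.2 S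

theorem eigDesc_sum_cfc_convexCombination_le {n : ℕ} (A D : Matrix (Fin n) (Fin n) ℂ)
    (hA : A.IsHermitian) (hD : D.IsHermitian)
    (I : Set ℝ)
    (hAspec : spectrum ℝ A ⊆ I) (hDspec : spectrum ℝ D ⊆ I)
    (f : ℝ → ℝ) (hf : ConvexOn ℝ I f)
    (α : ℝ) (hα0 : 0 < α) (hα1 : α < 1) :
    ∀ k : ℕ, k ≤ n →
      ∑ i ∈ Finset.filter (fun i : Fin n => (i : ℕ) < k) Finset.univ,
          eigDesc (cfc f (α • A + (1 - α) • D)) i ≤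
        ∑ i ∈ Finset.filter (fun i : Fin n => (i : ℕ) < k) Finset.univ,
          eigDesc (α • cfc f A + (1 - α) • cfc f D) i := by
  intro k hk
  have hC : (α • A + (1 - α) • D).IsHermitian :=
    ((IsSelfAdjoint.all α).smul hA).add ((IsSelfAdjoint.all (1 - α)).smul hD)
  have hM : (α • cfc f A + (1 - α) • cfc f D).IsHermitian :=
    ((IsSelfAdjoint.all α).smul (cfc_predicate f A)).add
      ((IsSelfAdjoint.all (1 - α)).smul (cfc_predicate f D))
  set V : Matrix (Fin n) (Fin n) ℂ := ↑hC.eigenvectorUnitary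
  obtain ⟨S, hcard, -, hsum⟩ := exists_sumLargest_eq_sum (f ∘ hC.eigenvalues) hk
  have hKyFan := sum_re_star_mul_cfc_mul_apply_le_sumLargest hM id hC.eigenvectorUnitary.2 S
  rw [cfc_id ℝ _ hM.isSelfAdjoint, hcard] at hKyFan
  calc _ ≤ sumLargest (f ∘ hC.eigenvalues) k := sum_eigDesc_cfc_le_sumLargest hC f hk
    _ = ∑ j ∈ S, f (RCLike.re ((star V * (α • A + (1 - α) • D) * V) j j)) := by
        simp only [hsum, Function.comp_apply, hC.re_star_eigenvectorUnitary_mul_mul_apply_self, V]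
    _ ≤ ∑ j ∈ S, RCLike.re ((star V * (α • cfc f A + (1 - α) • cfc f D) * V) j j) :=
        sum_le_sum fun j _ => map_re_star_mul_convexCombination_mul_apply_le hA hD hf hAspec
          hDspec hα0.le hα1.le hC.eigenvectorUnitary.2 j
    _ ≤ sumLargest hM.eigenvalues k := hKyFan
    _ = _ := (sum_eigDesc_eq_sumLargest hM k).symm
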